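/- Let 0 < a < b, A = (a+b)/2, and f : [a,b] → ℝ continuous on [a,b], differentiable on (a,A) ∪ (A,b), with |f'(t)| ≤ M₁·t^{-2} for t ∈ (a,A) and |f'(t)| ≤ M₂·t^{-2} for t ∈ (A,b). Then |f(A) - (1/(b-a))∫_a^b f(t) dt| ≤ (1/2)·[ M₁·(A - L(a,A))/(L(a,A)·A) + M₂·(L(A,b) - A)/(L(A,b)·A) ], where L(u,v) = (v-u)/(ln v - ln u) is the logarithmic mean. -/

import Mathlib

/-!
On each half of `[a, b]` the bound `|f'(t)| ≤ M t⁻²` says that `f` is dominated by the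
derivative of `-M / t`, so `|f(A) - f(t)| ≤ M |t⁻¹ - A⁻¹|`. Since `f(A)` minus the mean of `f` is
the mean of `f(A) - f(t)`, integrating these bounds over `[a, A]` and `[A, b]` gives
`log (A / a) - (A - a) / A = (A - a) (1 / L(a, A) - 1 / A)` and
`(b - A) / A - log (b / A) = (b - A) (1 / A - 1 / L(A, b))`.
-/

open MeasureTheory intervalIntegral Set

lemma abs_sub_le_sub_of_abs_hasDerivAt_le {f f' g g' : ℝ → ℝ} {c d : ℝ}
    (hf : ContinuousOn f (Icc c d)) (hg : ContinuousOn g (Icc c d))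
    (hf' : ∀ t ∈ Ioo c d, HasDerivAt f (f' t) t) (hg' : ∀ t ∈ Ioo c d, HasDerivAt g (g' t) t)
    (hle : ∀ t ∈ Ioo c d, |f' t| ≤ g' t) {x y : ℝ} (hx : x ∈ Icc c d) (hy : y ∈ Icc c d)
    (hxy : x ≤ y) : |f y - f x| ≤ g y - g x := by
  have hmono : ∀ s : ℝ, |s| ≤ 1 → MonotoneOn (fun t => g t - s * f t) (Icc c d) := by
    intro s hs
    refine monotoneOn_of_hasDerivWithinAt_nonneg (f' := fun t => g' t - s * f' t)
      (convex_Icc c d) (hg.sub (hf.const_smul s)) (fun t ht => ?_) (fun t ht => ?_) <;>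
      rw [interior_Icc] at ht
    · exact ((hg' t ht).sub ((hf' t ht).const_mul s)).hasDerivWithinAt
    · have hsf : s * f' t ≤ |f' t| := (le_abs_self _).trans <| by
        rw [abs_mul]; exact mul_le_of_le_one_left (abs_nonneg _) hs
      linarith [hle t ht]
  have h₁ := hmono 1 (by norm_num) hx hy hxy
  have h₂ := hmono (-1) (by norm_num) hx hy hxy
  simp only at h₁ h₂
  rw [abs_sub_le_iff]
  constructor <;> linarith

noncomputable def logMean (u v : ℝ) : ℝ := (v - u) / (Real.log v - Real.log u)

lemma inv_logMean {u v : ℝ} (hu : 0 < u) (huv : u < v) :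
    (logMean u v)⁻¹ = Real.log (v / u) / (v - u) := by
  rw [logMean, inv_div, Real.log_div (hu.trans huv).ne' hu.ne']

lemma logMean_pos {u v : ℝ} (hu : 0 < u) (huv : u < v) : 0 < logMean u v :=
  div_pos (sub_pos.2 huv) (sub_pos.2 (Real.log_lt_log hu huv))

lemma integral_inv_sub_inv_right {u v : ℝ} (hu : 0 < u) (huv : u < v) :
    ∫ t in u..v, (t⁻¹ - v⁻¹) = (v - u) * ((v - logMean u v) / (logMean u v * v)) := by
  have hv : 0 < v := hu.trans huv
  have hL := (logMean_pos hu huv).ne'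
  have hvu : v - u ≠ 0 := (sub_pos.2 huv).ne'
  rw [integral_sub (intervalIntegrable_inv_iff.2 (.inr (notMem_uIcc_of_lt hu hv)))
    intervalIntegrable_const, integral_inv_of_pos hu hv, intervalIntegral.integral_const,
    smul_eq_mul]
  have hsplit : (v - logMean u v) / (logMean u v * v) = (logMean u v)⁻¹ - v⁻¹ := by field_simp
  rw [hsplit, inv_logMean hu huv]
  field_simp

lemma integral_inv_sub_inv_left {u v : ℝ} (hu : 0 < u) (huv : u < v) :
    ∫ t in u..v, (u⁻¹ - t⁻¹) = (v - u) * ((logMean u v - u) / (logMean u v * u)) := by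
  have hv : 0 < v := hu.trans huv
  have hL := (logMean_pos hu huv).ne'
  have hvu : v - u ≠ 0 := (sub_pos.2 huv).ne'
  rw [integral_sub intervalIntegrable_const 
    (intervalIntegrable_inv_iff.2 (.inr (notMem_uIcc_of_lt hu hv))), integral_inv_of_pos hu hv,
    intervalIntegral.integral_const, smul_eq_mul]
  have hsplit : (logMean u v - u) / (logMean u v * u) = u⁻¹ - (logMean u v)⁻¹ := by field_simp
  rw [hsplit, inv_logMean hu huv]
  field_simp

section ReciprocalDerivativeBound

variable {f f' : ℝ → ℝ} {M c d : ℝ}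

lemma abs_sub_le_mul_inv_sub_inv (hc : 0 < c) (hf : ContinuousOn f (Icc c d))
    (hf' : ∀ t ∈ Ioo c d, HasDerivAt f (f' t) t) (hM : ∀ t ∈ Ioo c d, |f' t| ≤ M * t ^ (-2 : ℤ))
    {x y : ℝ} (hx : x ∈ Icc c d) (hy : y ∈ Icc c d) (hxy : x ≤ y) :
    |f y - f x| ≤ M * (x⁻¹ - y⁻¹) := by
  have hpos : ∀ t ∈ Icc c d, 0 < t := fun t ht => hc.trans_le ht.1
  have hg : ContinuousOn (fun t => -M * t⁻¹) (Icc c d) :=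
    continuousOn_const.mul (continuousOn_inv₀.mono fun t ht => (hpos t ht).ne')
  have hg' : ∀ t ∈ Ioo c d, HasDerivAt (fun t => -M * t⁻¹) (M * t ^ (-2 : ℤ)) t := fun t ht =>
    ((hasDerivAt_inv (hpos t (Ioo_subset_Icc_self ht)).ne').const_mul (-M)).congr_deriv
      (by rw [zpow_neg, zpow_ofNat]; ring)
  have hcmp := abs_sub_le_sub_of_abs_hasDerivAt_le hf hg hf' hg' hM hx hy hxy
  linarith

lemma integral_abs_sub_right_le (hc : 0 < c) (hcd : c < d) (hf : ContinuousOn f (Icc c d))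
    (hf' : ∀ t ∈ Ioo c d, HasDerivAt f (f' t) t) (hM : ∀ t ∈ Ioo c d, |f' t| ≤ M * t ^ (-2 : ℤ)) :
    ∫ t in c..d, |f d - f t| ≤ M * ((d - c) * ((d - logMean c d) / (logMean c d * d))) := by
  rw [← integral_inv_sub_inv_right hc hcd, ← intervalIntegral.integral_const_mul]
  refine integral_mono_on hcd.le ?_ ?_ fun t ht =>
    abs_sub_le_mul_inv_sub_inv hc hf hf' hM ht (right_mem_Icc.2 hcd.le) ht.2
  · exact (continuousOn_const.sub hf).abs.intervalIntegrable_of_Icc hcd.le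
  · exact (continuousOn_const.mul ((continuousOn_inv₀.mono fun t ht => (hc.trans_le ht.1).ne').sub
      continuousOn_const)).intervalIntegrable_of_Icc hcd.le

lemma integral_abs_sub_left_le (hc : 0 < c) (hcd : c < d) (hf : ContinuousOn f (Icc c d))
    (hf' : ∀ t ∈ Ioo c d, HasDerivAt f (f' t) t) (hM : ∀ t ∈ Ioo c d, |f' t| ≤ M * t ^ (-2 : ℤ)) :
    ∫ t in c..d, |f c - f t| ≤ M * ((d - c) * ((logMean c d - c) / (logMean c d * c))) := by
  rw [← integral_inv_sub_inv_left hc hcd, ← intervalIntegral.integral_const_mul]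
  refine integral_mono_on hcd.le ?_ ?_ fun t ht => (abs_sub_comm _ _).trans_le
    (abs_sub_le_mul_inv_sub_inv hc hf hf' hM (left_mem_Icc.2 hcd.le) ht ht.1)
  · exact (continuousOn_const.sub hf).abs.intervalIntegrable_of_Icc hcd.le
  · exact (continuousOn_const.mul (continuousOn_const.sub
      (continuousOn_inv₀.mono fun t ht => (hc.trans_le ht.1).ne'))).intervalIntegrable_of_Icc hcd.le

end ReciprocalDerivativeBound

lemma abs_sub_average_le {f : ℝ → ℝ} {a b : ℝ} (hab : a < b)
    (hf : IntervalIntegrable f volume a b) (x : ℝ) :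
    |x - (1 / (b - a)) * ∫ t in a..b, f t| ≤ (1 / (b - a)) * ∫ t in a..b, |x - f t| := by
  have hba : 0 < b - a := sub_pos.2 hab
  have hmean : x - (1 / (b - a)) * ∫ t in a..b, f t = (1 / (b - a)) * ∫ t in a..b, (x - f t) := by
    rw [integral_sub intervalIntegrable_const hf, intervalIntegral.integral_const, smul_eq_mul]
    field_simp
  rw [hmean, abs_mul, abs_of_pos (one_div_pos.2 hba)]
  exact mul_le_mul_of_nonneg_left (abs_integral_le_integral_abs hab.le) (one_div_pos.2 hba).le

theorem ostrowski_log_mean_midpoint (a b : ℝ) (ha : 0 < a) (hab : a < b)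
    (f f' : ℝ → ℝ) (M₁ M₂ : ℝ)
    (hfc : ContinuousOn f (Set.Icc a b))
    (hf' : ∀ t ∈ Set.Ioo a b \ {(a + b) / 2}, HasDerivAt f (f' t) t)
    (hM₁ : ∀ t ∈ Set.Ioo a ((a + b) / 2), |f' t| ≤ M₁ * t ^ (-2 : ℤ))
    (hM₂ : ∀ t ∈ Set.Ioo ((a + b) / 2) b, |f' t| ≤ M₂ * t ^ (-2 : ℤ)) :
    |f ((a + b) / 2) - (1 / (b - a)) * ∫ t in a..b, f t| ≤
      (1 / 2) *
        (M₁ * (((a + b) / 2 - ((a + b) / 2 - a) / (Real.log ((a + b) / 2) - Real.log a)) /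
            ((((a + b) / 2 - a) / (Real.log ((a + b) / 2) - Real.log a)) * ((a + b) / 2))) +
         M₂ * (((b - (a + b) / 2) / (Real.log b - Real.log ((a + b) / 2)) - (a + b) / 2) /
            (((b - (a + b) / 2) / (Real.log b - Real.log ((a + b) / 2))) * ((a + b) / 2)))) := by
  set A := (a + b) / 2 with hA
  have haA : a < A := by linarith
  have hAb : A < b := by linarith
  have hleft := integral_abs_sub_right_le ha haA (hfc.mono (Icc_subset_Icc_right hAb.le))
    (fun t ht => hf' t ⟨⟨ht.1, ht.2.trans hAb⟩, ht.2.ne⟩) hM₁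
  have hright := integral_abs_sub_left_le (ha.trans haA) hAb
    (hfc.mono (Icc_subset_Icc_left haA.le))
    (fun t ht => hf' t ⟨⟨haA.trans ht.1, ht.2⟩, ht.1.ne'⟩) hM₂
  have hint : IntervalIntegrable (fun t => |f A - f t|) volume a b :=
    (continuousOn_const.sub hfc).abs.intervalIntegrable_of_Icc hab.le
  have hmid : A ∈ uIcc a b := mem_uIcc_of_le haA.le hAb.le
  -- the last line of this chain is the claimed bound with `logMean` folded
  calc |f A - (1 / (b - a)) * ∫ t in a..b, f t|
      ≤ (1 / (b - a)) * ∫ t in a..b, |f A - f t| :=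
        abs_sub_average_le hab (hfc.intervalIntegrable_of_Icc hab.le) (f A)
    _ = (1 / (b - a)) * ((∫ t in a..A, |f A - f t|) + ∫ t in A..b, |f A - f t|) := by
        rw [integral_add_adjacent_intervals (hint.mono_set (uIcc_subset_uIcc left_mem_uIcc hmid))
          (hint.mono_set (uIcc_subset_uIcc hmid right_mem_uIcc))]
    _ ≤ (1 / (b - a)) * (M₁ * ((A - a) * ((A - logMean a A) / (logMean a A * A))) +
          M₂ * ((b - A) * ((logMean A b - A) / (logMean A b * A)))) := by
        gcongr
    _ = (1 / 2) * (M₁ * ((A - logMean a A) / (logMean a A * A)) +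
          M₂ * ((logMean A b - A) / (logMean A b * A))) := by
        rw [show A - a = (b - a) / 2 by linarith, show b - A = (b - a) / 2 by linarith]
        field_simp [(sub_pos.2 hab).ne']
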